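/- For each r ≥ 0 and n ≥ r, the (n-r)-th coefficient of the (r+1)-fold convolution of the shifted Catalan sequence (C_{m+1})_{m≥0} equals (2(r+1)/(n+r+2)) * binomial(2n+1, n-r). That is, the sum over compositions n_1 + ... + n_{r+1} = n - r of nonnegative integers of the product C_{n_1+1} * C_{n_2+1} * ... * C_{n_{r+1}+1} equals (2(r+1)/(n+r+2)) * binomial(2n+1, n-r), where C_m = (1/(m+1)) * binomial(2m, m) is the m-th Catalan number. -/

import Mathlib

/-!
With `C = ∑ catalan m • X^m` we have `C = 1 + X C²`, so `C²` is the generating function of the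
shifted Catalan numbers and the convolution is the `(n - r)`-th coefficient of `C^(2r+2)`.
Multiplying `C^j` by `C = 1 + X C²` gives `C^(j+1) = C^j + X C^(j+2)`, and by Pascal's rule the
ballot differences `choose (2m+j+1) (m+1) - choose (2m+j+1) m` satisfy the same recurrence,
so they are the coefficients `[X^(m+1)] C^j`. The closed form then follows from
`(m+1) * choose N (m+1) = (N-m) * choose N m`.
-/

open Finset

namespace PowerSeries

theorem coeff_prod_eq_sum_antidiagonalTuple {R : Type*} [CommSemiring R] {k : ℕ}
    (φ : Fin k → R⟦X⟧) (n : ℕ) :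
    coeff n (∏ i, φ i) = ∑ f ∈ Nat.antidiagonalTuple k n, ∏ i, coeff (f i) (φ i) := by
  rw [coeff_prod, finsuppAntidiag, sum_map, ← piAntidiag_univ_fin_eq_antidiagonalTuple,
    ← sum_attach (piAntidiag univ n)]
  rfl

theorem catalanSeries_sq_coeff (m : ℕ) : coeff m (catalanSeries ^ 2) = catalan (m + 1) := by
  have h := congrArg (coeff (m + 1)) catalanSeries_sq_mul_X_add_one
  rwa [map_add, coeff_succ_mul_X, coeff_one, if_neg m.succ_ne_zero, add_zero,
    catalanSeries_coeff] at h

theorem catalanSeries_pow_succ (j : ℕ) :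
    catalanSeries ^ (j + 1) = catalanSeries ^ j + X * catalanSeries ^ (j + 2) := by
  calc catalanSeries ^ (j + 1) = catalanSeries ^ j * (catalanSeries ^ 2 * X + 1) := by
        rw [pow_succ, catalanSeries_sq_mul_X_add_one]
    _ = _ := by ring

theorem catalanSeries_pow_coeff_succ_add_choose (m j : ℕ) :
    coeff (m + 1) (catalanSeries ^ j) + (2 * m + j + 1).choose m =
      (2 * m + j + 1).choose (m + 1) := by
  induction m generalizing j with
  | zero => simp [coeff_one_pow]
  | succ m ihm =>
    induction j with
    | zero =>
      rw [pow_zero, coeff_one, if_neg (Nat.succ_ne_zero _), zero_add, add_zero,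
        Nat.choose_symm_half]
    | succ j ihj =>
      have hm := ihm (j + 2)
      rw [catalanSeries_pow_succ, map_add, coeff_succ_X_mul]
      rw [show 2 * (m + 1) + (j + 1) + 1 = (2 * m + j + 3) + 1 by ring,
        Nat.choose_succ_succ' _ m, Nat.choose_succ_succ' _ (m + 1)]
      rw [show 2 * (m + 1) + j + 1 = 2 * m + j + 3 by ring] at ihj
      rw [show 2 * m + (j + 2) + 1 = 2 * m + j + 3 by ring] at hm
      omega

theorem catalanSeries_pow_coeff_mul (m k : ℕ) :
    (m + k + 1) * coeff m (catalanSeries ^ (k + 1)) = (k + 1) * (2 * m + k).choose m := by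
  cases m with
  | zero => simp
  | succ m =>
    have hdiff := catalanSeries_pow_coeff_succ_add_choose m (k + 1)
    have hratio := Nat.choose_succ_right_eq (2 * m + k + 2) m
    rw [show 2 * m + (k + 1) + 1 = 2 * m + k + 2 by ring] at hdiff
    rw [show 2 * m + k + 2 - m = m + k + 2 by omega] at hratio
    rw [show 2 * (m + 1) + k = 2 * m + k + 2 by ring]
    nlinarith

end PowerSeries

open PowerSeries in
/-- The (n-r)-th coefficient of the (r+1)-fold convolution of the shifted Catalan
sequence (C_{m+1}) equals (2(r+1)/(n+r+2)) * binom(2n+1, n-r). -/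
theorem catalan_convolution (n r : ℕ) (hr : r ≤ n) :
    ((∑ f ∈ Finset.Nat.antidiagonalTuple (r + 1) (n - r),
        ∏ i : Fin (r + 1), catalan (f i + 1) : ℕ) : ℚ) =
      2 * (r + 1) / (n + r + 2) * Nat.choose (2 * n + 1) (n - r) := by
  have hseries : ∑ f ∈ Finset.Nat.antidiagonalTuple (r + 1) (n - r),
      ∏ i : Fin (r + 1), catalan (f i + 1) = coeff (n - r) (catalanSeries ^ (2 * r + 1 + 1)) := by
    rw [show 2 * r + 1 + 1 = 2 * (r + 1) by ring, pow_mul, ← Fin.prod_const,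
      coeff_prod_eq_sum_antidiagonalTuple]
    simp only [catalanSeries_sq_coeff]
  have hcoeff := catalanSeries_pow_coeff_mul (n - r) (2 * r + 1)
  rw [← hseries, ← Nat.cast_inj (R := ℚ), show n - r + (2 * r + 1) + 1 = n + r + 2 by omega,
    show 2 * (n - r) + (2 * r + 1) = 2 * n + 1 by omega] at hcoeff
  rw [div_mul_eq_mul_div, eq_div_iff (by positivity)]
  push_cast at hcoeff ⊢
  linarith
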